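/- arXiv:2604.08593 — 3 statements merged into one kernel-verified Lean document; each statement's English description precedes it below -/
import Mathlib

section
/- The function D(x) = -3·ln(x) + 6x - (3/2)x² - 11/2 has exactly one zero x* in the open interval (0,1), and this zero satisfies 0.25 < x* < 0.27. -/
/-!
`D = top3SuccessDeriv` is strictly decreasing on `(0, 1)`, since `D'(x) = -3 (1 - x)² / x`,
so it has at most one zero there. With `log 2 ≈ 0.6931` one finds `D(0.25) ≈ 0.065 > 0`, and with `log (25/27) ≤ -2/27` one
finds `D(0.27) < 0`; the intermediate value theorem places the zero in `(0.25, 0.27)`.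
-/

open Real Set

noncomputable def top3SuccessDeriv (x : ℝ) : ℝ :=
  -3 * log x + 6 * x - (3 / 2) * x ^ 2 - 11 / 2

lemma hasDerivAt_top3SuccessDeriv {x : ℝ} (hx : x ≠ 0) :
    HasDerivAt top3SuccessDeriv (-3 * (1 - x) ^ 2 / x) x := by
  refine ((((hasDerivAt_log hx).const_mul (-3)).add ((hasDerivAt_id x).const_mul 6)).sub
    ((hasDerivAt_pow 2 x).const_mul (3 / 2))).sub_const (11 / 2) |>.congr_deriv ?_
  field_simp
  ring

lemma continuousOn_top3SuccessDeriv : ContinuousOn top3SuccessDeriv (Ioi 0) :=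
  fun _ hx => (hasDerivAt_top3SuccessDeriv (ne_of_gt hx)).continuousAt.continuousWithinAt

lemma strictAntiOn_top3SuccessDeriv : StrictAntiOn top3SuccessDeriv (Ioo 0 1) := by
  refine strictAntiOn_of_deriv_neg (convex_Ioo 0 1)
    (continuousOn_top3SuccessDeriv.mono Ioo_subset_Ioi_self) fun x hx => ?_
  rw [interior_Ioo] at hx
  rw [(hasDerivAt_top3SuccessDeriv hx.1.ne').deriv]
  have hsq : 0 < (1 - x) ^ 2 := pow_pos (sub_pos.2 hx.2) 2
  exact div_neg_of_neg_of_pos (by linarith) hx.1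

lemma top3SuccessDeriv_zero_two_five_pos : 0 < top3SuccessDeriv 0.25 := by
  have hlog : log 0.25 = -(2 * log 2) := by
    rw [show (0.25 : ℝ) = (2 ^ 2)⁻¹ by norm_num, log_inv, log_pow]
    push_cast
    ring
  have := log_two_gt_d9
  rw [top3SuccessDeriv, hlog]
  norm_num
  linarith

lemma top3SuccessDeriv_zero_two_seven_neg : top3SuccessDeriv 0.27 < 0 := by
  have hlog : log 0.27 = -log (25 / 27) - 2 * log 2 := by
    rw [show (0.27 : ℝ) = (25 / 27)⁻¹ / 2 ^ 2 by norm_num,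
      log_div (by norm_num) (by norm_num), log_inv, log_pow]
    push_cast
    ring
  have h25 : log (25 / 27) ≤ 25 / 27 - 1 := log_le_sub_one_of_pos (by norm_num)
  have := log_two_lt_d9
  rw [top3SuccessDeriv, hlog]
  norm_num
  linarith

/-- The function `D(x) = -3 ln x + 6x - (3/2)x² - 11/2` has exactly one zero `x*`
in `(0,1)`, and this zero satisfies `0.25 < x* < 0.27`. -/
theorem top3_threshold_unique_zero :
    ∃ x : ℝ, (x ∈ Set.Ioo (0 : ℝ) 1 ∧
        -3 * Real.log x + 6 * x - (3 / 2) * x ^ 2 - 11 / 2 = 0 ∧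
        0.25 < x ∧ x < 0.27) ∧
      ∀ y ∈ Set.Ioo (0 : ℝ) 1,
        -3 * Real.log y + 6 * y - (3 / 2) * y ^ 2 - 11 / 2 = 0 → y = x := by
  have hcont : ContinuousOn top3SuccessDeriv (Icc 0.25 0.27) :=
    continuousOn_top3SuccessDeriv.mono fun x hx => lt_of_lt_of_le (by norm_num) hx.1
  obtain ⟨x, hx, hDx⟩ := intermediate_value_Ioo' (by norm_num) hcont
    ⟨top3SuccessDeriv_zero_two_seven_neg, top3SuccessDeriv_zero_two_five_pos⟩
  have hx01 : x ∈ Ioo (0 : ℝ) 1 := ⟨lt_trans (by norm_num) hx.1, lt_trans hx.2 (by norm_num)⟩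
  refine ⟨x, ⟨hx01, hDx, hx.1, hx.2⟩, fun y hy hDy => ?_⟩
  exact strictAntiOn_top3SuccessDeriv.injOn hy hx01 (hDy.trans hDx.symm)
end

section
/- Let x* ∈ (0,1) be the unique zero of D(x) = -3·ln(x) + 6x - (3/2)x² - 11/2, and let P(x) = -3x·ln(x) + 3x² - x³/2 - 5x/2. Then P attains its maximum over (0,1] at x*, and 0.59 < P(x*) < 0.60. -/
/-!
`P' = D` on `(0, ∞)` and `D' = -3 (1 - x)² / x < 0` on `(0, 1)`, so `D` changes sign exactly
once, at `x*`, from positive to negative: `P` increases up to `x*` and decreases after it. At a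
zero of `D`, `ln x = 2x - x²/2 - 11/6`, which turns `P(x*)` into the polynomial value
`1 - (1 - x*)³`. Hence the bounds on `P(x*)` reduce to `0.2572 < x* < 0.2631`, which follow from
the signs of `D` at these two points, i.e. from bounds on their logarithms obtained from `ln 2`
and `ln y ≤ y - 1`.
-/

open Real Set

theorem isMaxOn_of_hasDerivAt_of_sign_change {f f' : ℝ → ℝ} {s : Set ℝ} {c : ℝ}
    (hs : Convex ℝ s) (hc : c ∈ s) (hcont : ContinuousOn f s)
    (hderiv : ∀ x ∈ interior s, HasDerivAt f (f' x) x)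
    (hpos : ∀ x ∈ interior s, x < c → 0 ≤ f' x) (hneg : ∀ x ∈ interior s, c < x → f' x ≤ 0) :
    IsMaxOn f s c := by
  have hmono : MonotoneOn f (s ∩ Iic c) := by
    refine monotoneOn_of_hasDerivWithinAt_nonneg (hs.inter (convex_Iic c))
      (hcont.mono inter_subset_left) (fun x hx => (hderiv x ?_).hasDerivWithinAt) fun x hx => ?_
    all_goals rw [interior_inter, interior_Iic] at hx
    exacts [hx.1, hpos x hx.1 hx.2]
  have hanti : AntitoneOn f (s ∩ Ici c) := by
    refine antitoneOn_of_hasDerivWithinAt_nonpos (hs.inter (convex_Ici c))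
      (hcont.mono inter_subset_left) (fun x hx => (hderiv x ?_).hasDerivWithinAt) fun x hx => ?_
    all_goals rw [interior_inter, interior_Ici] at hx
    exacts [hx.1, hneg x hx.1 hx.2]
  intro x hx
  rcases le_total x c with hxc | hcx
  · exact hmono ⟨hx, hxc⟩ ⟨hc, self_mem_Iic⟩ hxc
  · exact hanti ⟨hc, self_mem_Ici⟩ ⟨hx, hcx⟩ hcx

namespace Top3

noncomputable def P (x : ℝ) : ℝ := -3 * x * log x + 3 * x ^ 2 - x ^ 3 / 2 - 5 * x / 2

noncomputable def D (x : ℝ) : ℝ := -3 * log x + 6 * x - (3 / 2) * x ^ 2 - 11 / 2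

theorem hasDerivAt_P {x : ℝ} (hx : 0 < x) : HasDerivAt P (D x) x := by
  have hxlog : HasDerivAt (fun y => y * log y) (log x + 1) x :=
    ((hasDerivAt_id' x).mul (hasDerivAt_log hx.ne')).congr_deriv (by field_simp)
  have h := (((hxlog.const_mul (-3)).add ((hasDerivAt_pow 2 x).const_mul 3)).sub
    ((hasDerivAt_pow 3 x).div_const 2)).sub (((hasDerivAt_id' x).const_mul 5).div_const 2)
  rw [show P = fun y => -3 * (y * log y) + 3 * y ^ 2 - y ^ 3 / 2 - 5 * y / 2 by
    funext y; rw [P]; ring]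
  exact h.congr_deriv (by rw [D]; push_cast; ring)

theorem hasDerivAt_D {x : ℝ} (hx : 0 < x) : HasDerivAt D (-3 * (1 - x) ^ 2 / x) x := by
  have h := ((((hasDerivAt_log hx.ne').const_mul (-3)).add ((hasDerivAt_id' x).const_mul 6)).sub
    ((hasDerivAt_pow 2 x).const_mul (3 / 2))).sub_const (11 / 2)
  exact h.congr_deriv (by field_simp; push_cast; ring)

theorem strictAntiOn_D : StrictAntiOn D (Ioo 0 1) := by
  refine strictAntiOn_of_deriv_neg (convex_Ioo 0 1)
    (fun x hx => (hasDerivAt_D hx.1).continuousAt.continuousWithinAt) fun x hx => ?_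
  rw [interior_Ioo] at hx
  rw [(hasDerivAt_D hx.1).deriv]
  exact div_neg_of_neg_of_pos
    (mul_neg_of_neg_of_pos (by norm_num) (pow_pos (sub_pos.2 hx.2) 2)) hx.1

theorem P_eq_of_D_eq_zero {x : ℝ} (hx : D x = 0) : P x = 1 - (1 - x) ^ 3 := by
  have hlog : log x = 2 * x - x ^ 2 / 2 - 11 / 6 := by unfold D at hx; linarith
  rw [P, hlog]; ring

theorem isMaxOn_P {xs : ℝ} (hxs : xs ∈ Ioo 0 1) (hzero : D xs = 0) : IsMaxOn P (Ioc 0 1) xs := by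
  have hsign : ∀ x ∈ Ioo (0 : ℝ) 1, (x < xs → 0 < D x) ∧ (xs < x → D x < 0) := fun x hx =>
    ⟨fun h => hzero ▸ strictAntiOn_D hx hxs h, fun h => hzero ▸ strictAntiOn_D hxs hx h⟩
  refine isMaxOn_of_hasDerivAt_of_sign_change (convex_Ioc 0 1) (Ioo_subset_Ioc_self hxs)
    (fun x hx => (hasDerivAt_P hx.1).continuousAt.continuousWithinAt)
    (fun x hx => hasDerivAt_P (interior_subset hx).1) (fun x hx h => ?_) fun x hx h => ?_
  all_goals rw [interior_Ioc] at hx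
  exacts [(hsign x hx).1 h |>.le, (hsign x hx).2 h |>.le]

theorem D_0_2572_pos : 0 < D 0.2572 := by
  have hlog : log 0.2572 < -1.357 := by
    rw [show (0.2572 : ℝ) = 1.0288 / 2 ^ 2 by norm_num, log_div (by norm_num) (by norm_num),
      log_pow]
    linarith [log_le_sub_one_of_pos (show (0 : ℝ) < 1.0288 by norm_num), log_two_gt_d9]
  unfold D; linarith

theorem D_0_2631_neg : D 0.2631 < 0 := by
  have hlog : -1.3366 < log 0.2631 := by
    rw [show (0.2631 : ℝ) = 1.0524 / 2 ^ 2 by norm_num, log_div (by norm_num) (by norm_num),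
      log_pow]
    have h := one_sub_inv_le_log_of_pos (show (0 : ℝ) < 1.0524 by norm_num)
    norm_num at h
    linarith [log_two_lt_d9]
  unfold D; linarith

theorem mem_Ioo_of_D_eq_zero {xs : ℝ} (hxs : xs ∈ Ioo 0 1) (hzero : D xs = 0) :
    xs ∈ Ioo 0.2572 0.2631 :=
  ⟨(strictAntiOn_D.lt_iff_gt hxs (by norm_num : (0.2572 : ℝ) ∈ Ioo 0 1)).1 (hzero ▸ D_0_2572_pos),
    (strictAntiOn_D.lt_iff_gt (by norm_num : (0.2631 : ℝ) ∈ Ioo 0 1) hxs).1 (hzero ▸ D_0_2631_neg)⟩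

end Top3

theorem top3_optimal_value_general (xs : ℝ) (hxs : xs ∈ Set.Ioo (0 : ℝ) 1)
    (hzero : -3 * Real.log xs + 6 * xs - (3 / 2) * xs ^ 2 - 11 / 2 = 0) :
    let P : ℝ → ℝ := fun x => -3 * x * Real.log x + 3 * x ^ 2 - x ^ 3 / 2 - 5 * x / 2
    IsMaxOn P (Set.Ioc (0 : ℝ) 1) xs ∧ 0.59 < P xs ∧ P xs < 0.60 := by
  show IsMaxOn Top3.P (Ioc 0 1) xs ∧ 0.59 < Top3.P xs ∧ Top3.P xs < 0.60
  change Top3.D xs = 0 at hzero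
  obtain ⟨hlo, hhi⟩ := Top3.mem_Ioo_of_D_eq_zero hxs hzero
  rw [Top3.P_eq_of_D_eq_zero hzero]
  refine ⟨Top3.isMaxOn_P hxs hzero, ?_, ?_⟩ <;>
    nlinarith [mul_pos (sub_pos.2 hlo) (sub_pos.2 hhi), sq_nonneg (xs - 0.26)]

/-- If `x*` is the unique zero in `(0,1)` of `D(x) = -3 ln x + 6x - (3/2)x² - 11/2`,
then `P(x) = -3x ln x + 3x² - x³/2 - 5x/2` attains its maximum over `(0,1]` at `x*`,
and `0.59 < P(x*) < 0.60`. -/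
theorem top3_optimal_value (xs : ℝ) (hxs : xs ∈ Set.Ioo (0 : ℝ) 1)
    (hzero : -3 * Real.log xs + 6 * xs - (3 / 2) * xs ^ 2 - 11 / 2 = 0)
    (huniq : ∀ y ∈ Set.Ioo (0 : ℝ) 1,
      -3 * Real.log y + 6 * y - (3 / 2) * y ^ 2 - 11 / 2 = 0 → y = xs) :
    let P : ℝ → ℝ := fun x => -3 * x * Real.log x + 3 * x ^ 2 - x ^ 3 / 2 - 5 * x / 2
    IsMaxOn P (Set.Ioc (0 : ℝ) 1) xs ∧ 0.59 < P xs ∧ P xs < 0.60 :=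
  top3_optimal_value_general xs hxs hzero
end

section
/- Fix p ∈ [0,1] and x ∈ (0,1). Then the sequence n ↦ n·(1 - ((p + ⌊nx⌋)/(⌊nx⌋+1))·(1 - p/((1+p)(n - ⌊nx⌋)+1))) converges to (1-p)/x + p/((1+p)(1-x)) as n → ∞. -/
open Filter Topology

/-! Write `kₙ = ⌊n x⌋`, so `kₙ / n → x`. The coefficient splits as
`1 - (1 - aₙ)(1 - bₙ)` with `aₙ = (1 - p)/(kₙ + 1)` and `bₙ = p/((1 + p)(n - kₙ) + 1)`; both
denominators grow linearly in `n`, so `n aₙ → (1 - p)/x`, `n bₙ → p/((1 + p)(1 - x))` and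
`aₙ → 0`. Then `n(1 - (1 - aₙ)(1 - bₙ)) = n aₙ + (1 - aₙ) n bₙ` has the stated limit. -/

theorem tendsto_floor_mul_div_atTop {R : Type*} [TopologicalSpace R] [Field R] [LinearOrder R]
    [IsStrictOrderedRing R] [OrderTopology R] [FloorRing R] (a : R) :
    Tendsto (fun x ↦ (⌊x * a⌋ : R) / x) atTop (𝓝 a) := by
  have lower : Tendsto (fun x : R ↦ a - x⁻¹) atTop (𝓝 a) := by
    simpa using tendsto_const_nhds.sub (tendsto_inv_atTop_zero (𝕜 := R))
  refine tendsto_of_tendsto_of_tendsto_of_le_of_le' lower tendsto_const_nhds ?_ ?_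
  all_goals
    filter_upwards [eventually_gt_atTop 0] with x hx
  · rw [le_div_iff₀ hx, sub_mul, inv_mul_cancel₀ hx.ne', mul_comm]
    linarith [Int.sub_one_lt_floor (x * a)]
  · rw [div_le_iff₀ hx]
    exact (Int.floor_le _).trans_eq (mul_comm _ _)

theorem tendsto_natCast_mul_div_of_tendsto_div {u : ℕ → ℝ} {a : ℝ}
    (hu : Tendsto (fun n ↦ u n / n) atTop (𝓝 a)) (ha : a ≠ 0) (c : ℝ) :
    Tendsto (fun n : ℕ ↦ n * (c / u n)) atTop (𝓝 (c / a)) :=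
  (tendsto_const_nhds.div hu ha).congr fun n ↦ by
    simp only [Pi.div_apply, div_div_eq_mul_div]; ring

theorem tendsto_zero_of_tendsto_natCast_mul {v : ℕ → ℝ} {L : ℝ}
    (h : Tendsto (fun n : ℕ ↦ n * v n) atTop (𝓝 L)) : Tendsto v atTop (𝓝 0) := by
  have h' := h.mul tendsto_one_div_atTop_nhds_zero_nat
  rw [mul_zero] at h'
  refine h'.congr' ?_
  filter_upwards [eventually_ne_atTop 0] with n hn
  field_simp

/-- For fixed `p ∈ [0,1]` and `x ∈ (0,1)`, the sequence
`n ↦ n·(1 - ((p+⌊nx⌋)/(⌊nx⌋+1))·(1 - p/((1+p)(n-⌊nx⌋)+1)))`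
converges to `(1-p)/x + p/((1+p)(1-x))`. -/
theorem phi_h_limit (p x : ℝ) (hp : p ∈ Set.Icc (0 : ℝ) 1) (hx : x ∈ Set.Ioo (0 : ℝ) 1) :
    Tendsto (fun n : ℕ =>
        (n : ℝ) * (1 - ((p + (⌊(n : ℝ) * x⌋ : ℝ)) / ((⌊(n : ℝ) * x⌋ : ℝ) + 1)) *
          (1 - p / ((1 + p) * ((n : ℝ) - (⌊(n : ℝ) * x⌋ : ℝ)) + 1))))
      atTop (nhds ((1 - p) / x + p / ((1 + p) * (1 - x)))) := by
  obtain ⟨hp0, -⟩ := hp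
  obtain ⟨hx0, hx1⟩ := hx
  set k : ℕ → ℝ := fun n ↦ (⌊(n : ℝ) * x⌋ : ℝ) with hk_def
  have hk : Tendsto (fun n ↦ k n / n) atTop (𝓝 x) :=
    (tendsto_floor_mul_div_atTop x).comp tendsto_natCast_atTop_atTop
  have hinv : Tendsto (fun n : ℕ ↦ 1 / (n : ℝ)) atTop (𝓝 0) :=
    tendsto_one_div_atTop_nhds_zero_nat
  have ha : Tendsto (fun n : ℕ ↦ n * ((1 - p) / (k n + 1))) atTop (𝓝 ((1 - p) / x)) := by
    refine tendsto_natCast_mul_div_of_tendsto_div ?_ hx0.ne' _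
    simpa [add_div] using hk.add hinv
  have hb : Tendsto (fun n : ℕ ↦ n * (p / ((1 + p) * (n - k n) + 1))) atTop
      (𝓝 (p / ((1 + p) * (1 - x)))) := by
    refine tendsto_natCast_mul_div_of_tendsto_div ?_ (by nlinarith) _
    have h := ((hk.const_sub 1).const_mul (1 + p)).add hinv
    rw [add_zero] at h
    refine h.congr' ?_
    filter_upwards [eventually_ne_atTop 0] with n hn
    field_simp
  have hsum := ha.add (((tendsto_zero_of_tendsto_natCast_mul ha).const_sub 1).mul hb)
  rw [sub_zero, one_mul] at hsum
  refine hsum.congr fun n ↦ ?_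
  have hk0 : 0 ≤ k n := by simp only [hk_def]; exact_mod_cast Int.floor_nonneg.mpr (by positivity)
  have hA : (p + k n) / (k n + 1) = 1 - (1 - p) / (k n + 1) := by field_simp; ring
  show _ = (n : ℝ) * (1 - (p + k n) / (k n + 1) * _)
  rw [hA]
  ring
end
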